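/- Under the Reich–Shaby construction with the sum-to-one constraint Σ_{l=1}^L K_l(s) = 1 for all s, each marginal distribution of Z(s) is unit Fréchet: Pr(Z(s) ≤ z) = exp(-1/z) for all z > 0. -/

import Mathlib

/-!
Conditionally on the positive stable variables, `Z(s) ≤ z` is the event
`ε ≤ z / U^α` with `U = ∑ₗ Kₗ^{1/α} Aₗ`, which by independence has probability
`exp (-z^{-1/α} U)`, since `ε` is Fréchet with shape `1/α`. Averaging over `U` gives the
Laplace transform of `U` at `z^{-1/α}`; by independence and `E exp(-s Aₗ) = exp(-s^α)` it is
`exp (-z⁻¹ ∑ₗ Kₗ) = exp (-1/z)`.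

The noise `ε` is not assumed measurable, so the conditioning is done by hand: the sublevel
events of `ε` are independent of the σ-algebra generated by the `Aₗ`, and `{ε ≤ c}` for a
`c` measurable in that σ-algebra is squeezed between events where `c` is rounded to a grid.
-/

open MeasureTheory ProbabilityTheory Real
open Filter Topology

section Conditioning

variable {Ω : Type*} {m : MeasurableSpace Ω} [mΩ : MeasurableSpace Ω] {P : Measure Ω}
  {ε : Ω → ℝ}

lemma measure_setOf_le_comp_int_eq_lintegral (hm : m ≤ mΩ)
    (hfac : ∀ t s, MeasurableSet[m] s → P (s ∩ {ω | ε ω ≤ t}) = P s * P {ω | ε ω ≤ t})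
    {k : Ω → ℤ} (hk : Measurable[m] k) (ρ : ℤ → ℝ) :
    P {ω | ε ω ≤ ρ (k ω)} = ∫⁻ ω, P {x | ε x ≤ ρ (k ω)} ∂P := by
  have hk' : Measurable k := hk.mono hm le_rfl
  have hfib (n : ℤ) : MeasurableSet (k ⁻¹' {n}) := hk' (measurableSet_singleton n)
  have hslice (n : ℤ) :
      k ⁻¹' {n} ∩ {ω | ε ω ≤ ρ (k ω)} = k ⁻¹' {n} ∩ {ω | ε ω ≤ ρ n} := by
    ext ω
    simp +contextual [Set.mem_preimage]
  calc P {ω | ε ω ≤ ρ (k ω)}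
      = ∑' n, P.restrict {ω | ε ω ≤ ρ (k ω)} (k ⁻¹' {n}) := by
        rw [← measure_iUnion (fun i j hij => (Set.disjoint_singleton.2 hij).preimage k) hfib,
          ← Set.preimage_iUnion, Set.iUnion_of_singleton, Set.preimage_univ,
          Measure.restrict_apply_univ]
    _ = ∑' n, P {x | ε x ≤ ρ n} * P (k ⁻¹' {n}) := by
        refine tsum_congr fun n => ?_
        rw [Measure.restrict_apply (hfib n), hslice, hfac _ _ (hk (measurableSet_singleton n)),
          mul_comm]
    _ = ∫⁻ ω, P {x | ε x ≤ ρ (k ω)} ∂P := by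
        rw [← lintegral_map (f := fun n => P {x | ε x ≤ ρ n}) (measurable_of_countable _) hk',
          lintegral_countable']
        exact tsum_congr fun n => by rw [Measure.map_apply hk' (measurableSet_singleton n)]

lemma tendsto_round_mul_div {r : ℝ → ℤ} (hr : ∀ y, |(r y : ℝ) - y| ≤ 1) (x : ℝ) :
    Tendsto (fun n : ℕ => (r (x * (n + 1)) : ℝ) / (n + 1)) atTop (𝓝 x) := by
  refine tendsto_iff_dist_tendsto_zero.2 <|
    squeeze_zero (fun _ => dist_nonneg) (fun n => ?_) tendsto_one_div_add_atTop_nhds_zero_nat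
  have hn : (0 : ℝ) < n + 1 := n.cast_add_one_pos
  have hsub : (r (x * (n + 1)) : ℝ) / (n + 1) - x
      = (r (x * (n + 1)) - x * (n + 1)) / (n + 1) := by
    field_simp
  rw [Real.dist_eq, hsub, abs_div, abs_of_pos hn]
  exact div_le_div_of_nonneg_right (hr _) hn.le

lemma measure_setOf_le_eq_lintegral [IsFiniteMeasure P] (hm : m ≤ mΩ)
    (hfac : ∀ t s, MeasurableSet[m] s → P (s ∩ {ω | ε ω ≤ t}) = P s * P {ω | ε ω ≤ t})
    {c : Ω → ℝ} (hc : Measurable[m] c)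
    (hcont : ∀ᵐ ω ∂P, ContinuousAt (fun t => P {x | ε x ≤ t}) (c ω)) :
    P {ω | ε ω ≤ c ω} = ∫⁻ ω, P {x | ε x ≤ c ω} ∂P := by
  have hlim {r : ℝ → ℤ} (hr : ∀ y, |(r y : ℝ) - y| ≤ 1) (hrm : Measurable r) :
      Tendsto (fun n : ℕ => P {ω | ε ω ≤ (r (c ω * (n + 1)) : ℝ) / (n + 1)}) atTop
        (𝓝 (∫⁻ ω, P {x | ε x ≤ c ω} ∂P)) := by
    have hk (n : ℕ) : Measurable[m] fun ω => r (c ω * (n + 1)) := hrm.comp (hc.mul_const _)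
    simp_rw [fun n : ℕ => measure_setOf_le_comp_int_eq_lintegral hm hfac (hk n)
      (fun j => j / (n + 1))]
    refine tendsto_lintegral_of_dominated_convergence (fun _ => P Set.univ)
      (fun n => (measurable_of_countable fun j : ℤ => P {x | ε x ≤ j / (n + 1)}).comp
        ((hk n).mono hm le_rfl))
      (fun n => ae_of_all _ fun ω => measure_mono (Set.subset_univ _))
      (by simpa using ENNReal.mul_ne_top (measure_ne_top P _) (measure_ne_top P _)) ?_
    filter_upwards [hcont] with ω hω
    exact hω.tendsto.comp (tendsto_round_mul_div hr (c ω))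
  have hceil : ∀ y : ℝ, |(⌈y⌉ : ℝ) - y| ≤ 1 := fun y =>
    abs_le.2 ⟨by linarith [Int.le_ceil y], by linarith [Int.ceil_lt_add_one y]⟩
  have hfloor : ∀ y : ℝ, |(⌊y⌋ : ℝ) - y| ≤ 1 := fun y =>
    abs_le.2 ⟨by linarith [Int.sub_one_lt_floor y], by linarith [Int.floor_le y]⟩
  refine le_antisymm (ge_of_tendsto (hlim hceil Int.measurable_ceil) (Eventually.of_forall
    fun n => measure_mono fun ω (hω : ε ω ≤ c ω) => hω.trans ?_))
    (le_of_tendsto (hlim hfloor Int.measurable_floor) (Eventually.of_forall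
    fun n => measure_mono fun ω (hω : ε ω ≤ _) => hω.trans ?_))
  · rw [le_div_iff₀ n.cast_add_one_pos]; exact Int.le_ceil _
  · rw [div_le_iff₀ n.cast_add_one_pos]; exact Int.floor_le _

end Conditioning

lemma ProbabilityTheory.iIndepFun.measure_inter_setOf_le_eq_mul {Ω ι : Type*}
    [mΩ : MeasurableSpace Ω] {P : Measure Ω} [IsProbabilityMeasure P] {X : ι → Ω → ℝ}
    (hX : ∀ i, Measurable (X i)) {ε : Ω → ℝ} (h : iIndepFun (Sum.elim X fun _ : Unit => ε) P)
    (t : ℝ) {s : Set Ω} (hs : MeasurableSet[⨆ i, MeasurableSpace.comap (X i) inferInstance] s) :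
    P (s ∩ {ω | ε ω ≤ t}) = P s * P {ω | ε ω ≤ t} := by
  let M : ι ⊕ Unit → MeasurableSpace Ω := fun i =>
    MeasurableSpace.comap (Sum.elim X (fun _ => ε) i) inferInstance
  let 𝒞 : Set (Set Ω) :=
    piiUnionInter (fun i => {u | MeasurableSet[M i] u}) (Set.range Sum.inl)
  have hgen :
      ⨆ i, MeasurableSpace.comap (X i) inferInstance = MeasurableSpace.generateFrom 𝒞 :=
    ((generateFrom_piiUnionInter_measurableSet M (Set.range Sum.inl)).trans iSup_range).symm
  have hpi : IsPiSystem 𝒞 :=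
    isPiSystem_piiUnionInter _ (fun i => @MeasurableSpace.isPiSystem_measurableSet Ω (M i)) _
  have hindep := indepSets_piiUnionInter_of_disjoint
    ((iIndepFun_iff_iIndep _ _ _).1 h).iIndepSets' (S := Set.range Sum.inl) (T := {Sum.inr ()})
    (by simp)
  have hε :
      {ω | ε ω ≤ t} ∈ piiUnionInter (fun i => {u | MeasurableSet[M i] u}) {Sum.inr ()} := by
    rw [piiUnionInter_singleton]
    exact Or.inl ⟨Set.Iic t, measurableSet_Iic, rfl⟩
  have hle : ⨆ i, MeasurableSpace.comap (X i) inferInstance ≤ mΩ :=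
    iSup_le fun i => (hX i).comap_le
  calc P (s ∩ {ω | ε ω ≤ t}) = P.restrict {ω | ε ω ≤ t} s :=
        (Measure.restrict_apply (hle s hs)).symm
    _ = (P {ω | ε ω ≤ t} • P) s := by
      refine ext_on_measurableSpace_of_generate_finite mΩ 𝒞 (fun u hu => ?_) hle hgen hpi ?_ hs
      · have hu' : MeasurableSet u := hle _ (hgen ▸ MeasurableSpace.measurableSet_generateFrom hu)
        rw [Measure.restrict_apply hu', (IndepSets_iff _ _ _).1 hindep _ _ hu hε,
          Measure.smul_apply, smul_eq_mul, mul_comm]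
      · simp
    _ = P s * P {ω | ε ω ≤ t} := mul_comm _ _

lemma aemeasurable_of_integral_exp_mul_ne_zero {Ω : Type*} [MeasurableSpace Ω]
    {P : Measure Ω} {f : Ω → ℝ} {s : ℝ} (hs : s ≠ 0) (h : ∫ ω, exp (s * f ω) ∂P ≠ 0) :
    AEMeasurable f P := by
  have hexp : AEMeasurable (fun ω => exp (s * f ω)) P :=
    (Integrable.of_integral_ne_zero h).aemeasurable
  refine ((measurable_log.comp_aemeasurable hexp).div_const s).congr (ae_of_all _ fun ω => ?_)
  simp [hs]

lemma ae_pos_sum_mul {Ω ι : Type*} [MeasurableSpace Ω] {P : Measure Ω} [Fintype ι]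
    {w : ι → ℝ} (hw : ∀ i, 0 ≤ w i) (hw_pos : ∃ i, 0 < w i) {X : ι → Ω → ℝ}
    (hX : ∀ i, ∀ᵐ ω ∂P, 0 < X i ω) : ∀ᵐ ω ∂P, 0 < ∑ i, w i * X i ω := by
  obtain ⟨i₀, hi₀⟩ := hw_pos
  filter_upwards [ae_all_iff.2 hX] with ω hω
  exact Finset.sum_pos' (fun i _ => mul_nonneg (hw i) (hω i).le)
    ⟨i₀, Finset.mem_univ _, mul_pos hi₀ (hω i₀)⟩

lemma integral_exp_neg_mul_sum_of_laplace {Ω ι : Type*} [MeasurableSpace Ω]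
    {P : Measure Ω} [Fintype ι] {X : ι → Ω → ℝ} (hX : ∀ i, Measurable (X i))
    (hind : iIndepFun X P) {α : ℝ}
    (hlap : ∀ i, ∀ s : ℝ, 0 ≤ s → ∫ ω, exp (-s * X i ω) ∂P = exp (-(s ^ α)))
    {w : ι → ℝ} (hw : ∀ i, 0 ≤ w i) {s : ℝ} (hs : 0 ≤ s) :
    ∫ ω, exp (-s * ∑ i, w i * X i ω) ∂P = exp (-(s ^ α * ∑ i, w i ^ α)) := by
  have hsum := (hind.comp (fun i x => w i * x) fun i => measurable_id.const_mul _).mgf_sum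
    (fun i => (hX i).const_mul _) Finset.univ (t := -s)
  simp only [mgf, Finset.sum_apply, Function.comp_apply] at hsum
  rw [hsum, Finset.mul_sum, ← Finset.sum_neg_distrib, exp_sum]
  refine Finset.prod_congr rfl fun i _ => ?_
  rw [← mul_rpow hs (hw i), ← hlap i _ (mul_nonneg hs (hw i))]
  simp only [neg_mul, mul_assoc]

lemma div_rpow_rpow_neg_one_div {z u α : ℝ} (hz : 0 ≤ z) (hu : 0 ≤ u) (hα : α ≠ 0) :
    (z / u ^ α) ^ (-(1 / α)) = z ^ (-(1 / α)) * u := by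
  rw [div_rpow hz (rpow_nonneg hu α), ← rpow_mul hu, mul_neg, mul_one_div_cancel hα,
    rpow_neg_one, div_inv_eq_mul]

lemma measure_le_div_rpow_sum_eq_ofReal_integral {Ω ι : Type*} [MeasurableSpace Ω]
    {P : Measure Ω} [IsProbabilityMeasure P] [Fintype ι] {X : ι → Ω → ℝ}
    (hX : ∀ i, Measurable (X i)) {ε : Ω → ℝ}
    (hind : iIndepFun (Sum.elim X fun _ : Unit => ε) P) {α : ℝ} (hα : α ≠ 0)
    (hε : ∀ t : ℝ, 0 < t → P {ω | ε ω ≤ t} = ENNReal.ofReal (exp (-(t ^ (-(1 / α))))))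
    {w : ι → ℝ} (hpos : ∀ᵐ ω ∂P, 0 < ∑ i, w i * X i ω) {z : ℝ} (hz : 0 < z) :
    P {ω | ε ω ≤ z / (∑ i, w i * X i ω) ^ α}
      = ENNReal.ofReal (∫ ω, exp (-z ^ (-(1 / α)) * ∑ i, w i * X i ω) ∂P) := by
  set U : Ω → ℝ := fun ω => ∑ i, w i * X i ω
  have hU : Measurable[⨆ i, MeasurableSpace.comap (X i) inferInstance] U := by
    refine Finset.measurable_sum _ fun i _ => Measurable.const_mul ?_ _
    exact (comap_measurable (X i)).mono
      (le_iSup (fun i => MeasurableSpace.comap (X i) inferInstance) i) le_rfl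
  have hcont (x : ℝ) (hx : 0 < x) : ContinuousAt (fun t => P {ω | ε ω ≤ t}) x := by
    have h : ContinuousAt (fun t : ℝ => ENNReal.ofReal (exp (-(t ^ (-(1 / α)))))) x :=
      ENNReal.continuous_ofReal.continuousAt.comp (continuous_exp.continuousAt.comp
        (continuousAt_rpow_const x (-(1 / α)) (Or.inl hx.ne')).neg)
    refine h.congr ?_
    filter_upwards [eventually_gt_nhds hx] with t ht
    exact (hε t ht).symm
  have hcdf : ∀ᵐ ω ∂P, P {x | ε x ≤ z / U ω ^ α}
      = ENNReal.ofReal (exp (-z ^ (-(1 / α)) * U ω)) := by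
    filter_upwards [hpos] with ω hω
    rw [hε _ (div_pos hz (rpow_pos_of_pos hω α)), div_rpow_rpow_neg_one_div hz.le hω.le hα,
      neg_mul]
  have hint : Integrable (fun ω => exp (-z ^ (-(1 / α)) * U ω)) P := by
    refine Integrable.of_bound (by fun_prop) 1 ?_
    filter_upwards [hpos] with ω hω
    rw [norm_of_nonneg (exp_pos _).le, exp_le_one_iff, neg_mul, neg_nonpos]
    exact mul_nonneg (rpow_nonneg hz.le _) hω.le
  calc P {ω | ε ω ≤ z / U ω ^ α}
      = ∫⁻ ω, P {x | ε x ≤ z / U ω ^ α} ∂P :=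
        measure_setOf_le_eq_lintegral (iSup_le fun i => (hX i).comap_le)
          (fun t s hs => hind.measure_inter_setOf_le_eq_mul hX t hs)
          ((hU.pow_const α).const_div z)
          (hpos.mono fun ω hω => hcont _ (div_pos hz (rpow_pos_of_pos hω α)))
    _ = ∫⁻ ω, ENNReal.ofReal (exp (-z ^ (-(1 / α)) * U ω)) ∂P := lintegral_congr_ae hcdf
    _ = _ :=
      (ofReal_integral_eq_lintegral_ofReal hint (ae_of_all _ fun _ => (exp_pos _).le)).symm

theorem reich_shaby_unit_frechet_margins_general
    {Ω : Type*} [MeasurableSpace Ω] (P : Measure Ω) [IsProbabilityMeasure P]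
    (L : ℕ)
    (α : ℝ) (hα : α ∈ Set.Ioo (0:ℝ) 1)
    (A : Fin L → Ω → ℝ) (ε : Ω → ℝ)
    (K : Fin L → ℝ) (hK : ∀ l, 0 ≤ K l) (hKsum : ∑ l, K l = 1)
    -- A_1,…,A_L and ε are mutually independent:
    (hindep : iIndepFun (m := fun _ : Fin L ⊕ Unit => (inferInstance : MeasurableSpace ℝ))
      (Sum.elim A (fun _ => ε)) P)
    (hApos : ∀ l, ∀ᵐ ω ∂P, 0 < A l ω)
    (hA_laplace : ∀ l, ∀ s : ℝ, 0 ≤ s →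
      ∫ ω, Real.exp (-s * A l ω) ∂P = Real.exp (-(s ^ α)))
    (hε : ∀ z : ℝ, 0 < z →
      P {ω | ε ω ≤ z} = ENNReal.ofReal (Real.exp (-(z ^ (-(1/α)))))) :
    ∀ z : ℝ, 0 < z →
      P {ω | ε ω * (∑ l, A l ω * K l ^ (1/α)) ^ α ≤ z}
        = ENNReal.ofReal (Real.exp (-(1 / z))) := by
  intro z hz
  have hAm (l : Fin L) : AEMeasurable (A l) P := aemeasurable_of_integral_exp_mul_ne_zero
    (s := -1) (by norm_num) (by rw [hA_laplace l 1 zero_le_one]; exact (exp_pos _).ne')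
  set A' : Fin L → Ω → ℝ := fun l => (hAm l).mk (A l)
  have hA'm (l : Fin L) : Measurable (A' l) := (hAm l).measurable_mk
  have hAA' (l : Fin L) : A l =ᵐ[P] A' l := (hAm l).ae_eq_mk
  have hindep' : iIndepFun (Sum.elim A' fun _ : Unit => ε) P :=
    (iIndepFun_congr fun | .inl l => hAA' l | .inr _ => ae_eq_refl _).1 hindep
  have hlap (l : Fin L) (s : ℝ) (hs : 0 ≤ s) : ∫ ω, exp (-s * A' l ω) ∂P = exp (-(s ^ α)) :=
    (integral_congr_ae ((hAA' l).fun_comp fun a => exp (-s * a))).symm.trans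
      (hA_laplace l s hs)
  have hpos : ∀ᵐ ω ∂P, 0 < ∑ l, K l ^ (1 / α) * A' l ω := by
    obtain ⟨l₀, -, hl₀⟩ :=
      Finset.exists_lt_of_sum_lt (by simp [hKsum] : ∑ _ : Fin L, (0 : ℝ) < ∑ l, K l)
    refine ae_pos_sum_mul (fun l => rpow_nonneg (hK l) _) ⟨l₀, rpow_pos_of_pos hl₀ _⟩
      fun l => ?_
    filter_upwards [hApos l, hAA' l] with ω h h'
    exact h' ▸ h
  have hset : {ω | ε ω * (∑ l, A l ω * K l ^ (1/α)) ^ α ≤ z}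
      =ᵐ[P] {ω | ε ω ≤ z / (∑ l, K l ^ (1 / α) * A' l ω) ^ α} := by
    filter_upwards [ae_all_iff.2 hAA', hpos] with ω hω hUω
    have hS : ∑ l, A l ω * K l ^ (1 / α) = ∑ l, K l ^ (1 / α) * A' l ω := by
      simp only [hω, mul_comm]
    change (ε ω * _ ^ α ≤ z) = (ε ω ≤ z / _ ^ α)
    rw [hS, le_div_iff₀ (rpow_pos_of_pos hUω α)]
  have hK' (l : Fin L) : (K l ^ (1 / α)) ^ α = K l := by
    rw [← rpow_mul (hK l), one_div_mul_cancel hα.1.ne', rpow_one]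
  rw [measure_congr hset,
    measure_le_div_rpow_sum_eq_ofReal_integral hA'm hindep' hα.1.ne' hε hpos hz,
    integral_exp_neg_mul_sum_of_laplace hA'm (hindep'.precomp Sum.inl_injective) hlap
      (fun l => rpow_nonneg (hK l) _) (rpow_nonneg hz.le _),
    ← rpow_mul hz.le, neg_mul, one_div_mul_cancel hα.1.ne', rpow_neg_one]
  rw [Finset.sum_congr rfl fun l _ => hK' l, hKsum, mul_one, one_div]

/-- Under the Reich–Shaby construction with the sum-to-one
constraint Σ_l K_l(s) = 1, the marginal distribution of
Z(s) = ε(s)·(Σ_l A_l K_l(s)^{1/α})^α is unit Fréchet: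
Pr(Z(s) ≤ z) = exp(-1/z) for all z > 0. -/
theorem reich_shaby_unit_frechet_margins
    {Ω : Type*} [MeasurableSpace Ω] (P : Measure Ω) [IsProbabilityMeasure P]
    (L : ℕ) (hL : 0 < L)
    (α : ℝ) (hα : α ∈ Set.Ioo (0:ℝ) 1)
    (A : Fin L → Ω → ℝ) (ε : Ω → ℝ)
    (K : Fin L → ℝ) (hK : ∀ l, 0 ≤ K l) (hKsum : ∑ l, K l = 1)
    -- A_1,…,A_L and ε are mutually independent:
    (hindep : iIndepFun (m := fun _ : Fin L ⊕ Unit => (inferInstance : MeasurableSpace ℝ))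
      (Sum.elim A (fun _ => ε)) P)
    (hApos : ∀ l, ∀ᵐ ω ∂P, 0 < A l ω)
    (hA_laplace : ∀ l, ∀ s : ℝ, 0 ≤ s →
      ∫ ω, Real.exp (-s * A l ω) ∂P = Real.exp (-(s ^ α)))
    (hε : ∀ z : ℝ, 0 < z →
      P {ω | ε ω ≤ z} = ENNReal.ofReal (Real.exp (-(z ^ (-(1/α)))))) :
    ∀ z : ℝ, 0 < z →
      P {ω | ε ω * (∑ l, A l ω * K l ^ (1/α)) ^ α ≤ z}
        = ENNReal.ofReal (Real.exp (-(1 / z))) :=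
  reich_shaby_unit_frechet_margins_general P L α hα A ε K hK hKsum hindep hApos hA_laplace hε
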